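/- Let F_n be the free group of rank n and 𝔈_r(n) = {f ∈ End(F_n) : f(x)x⁻¹ ∈ Γ_{r+1} for all x ∈ F_n}. For each r ≥ 1 and N ≥ r, every element of the quotient monoid 𝔈_r(n)/∼_N is invertible, where f ∼_N g iff f(x)x⁻¹ ≡ g(x)x⁻¹ mod Γ_{N+1} for all x ∈ F_n. In particular 𝔈_r(n)/∼_N is a group. -/

import Mathlib

/-- `Gam G k` is the `k`-th term `Γ_k` of the lower central series of `G`
(with the convention `Γ_1 = G`). -/
abbrev Gam (G : Type*) [Group G] (k : ℕ) : Subgroup G := (⊤ : Subgroup G).lowerCentralSeries (k - 1)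

/-!
Write `γ k = Γ_{k+1}` (Mathlib's indexing), so that `f ∈ 𝔈_r` means `f x * x⁻¹ ∈ γ r` for all `x`.
By the three subgroups lemma `⁅γ m, γ n⁆ ≤ γ (m + n + 1)`, and from this one gets Andreadakis'
estimate: `f ∈ 𝔈_r` moves every element of `γ s` only by an element of `γ (s + r)`.

On the free group this makes a Newton iteration possible: if `f ∘ g ≡ id` modulo `γ k`, correct `g`
on the generators by the inverse of the error, `xᵢ ↦ (f (g xᵢ) xᵢ⁻¹)⁻¹ xᵢ`; the new error lies in
`γ (k + r)`. So every `f ∈ 𝔈_r` (`r ≥ 1`) has a right inverse modulo any `γ N` inside `𝔈_r`.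
Modulo the fully invariant `γ N` the endomorphisms form a monoid in which every element of `𝔈_r`
has a right inverse in `𝔈_r`, and such right inverses are then two-sided.
-/

open scoped commutatorElement

namespace Subgroup

variable {G : Type*} [Group G]

theorem commutator_commutator_le_of_rotate {H₁ H₂ H₃ N : Subgroup G} [N.Normal]
    (h1 : ⁅⁅H₂, H₃⁆, H₁⁆ ≤ N) (h2 : ⁅⁅H₃, H₁⁆, H₂⁆ ≤ N) : ⁅⁅H₁, H₂⁆, H₃⁆ ≤ N := by
  have key : ∀ {A B C : Subgroup G}, ⁅⁅A, B⁆, C⁆ ≤ N ↔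
      ⁅⁅A.map (QuotientGroup.mk' N), B.map (QuotientGroup.mk' N)⁆,
        C.map (QuotientGroup.mk' N)⁆ = ⊥ := by
    intro A B C
    rw [← map_commutator, ← map_commutator, map_eq_bot_iff, QuotientGroup.ker_mk']
  rw [key]
  exact commutator_commutator_eq_bot_of_rotate (key.mp h1) (key.mp h2)

local notation "γ" => Subgroup.lowerCentralSeries (⊤ : Subgroup G)

theorem commutator_lowerCentralSeries_le (m n : ℕ) : ⁅γ m, γ n⁆ ≤ γ (m + n + 1) := by
  induction n generalizing m with
  | zero => rfl
  | succ n ih =>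
    rw [lowerCentralSeries_succ, commutator_comm (γ m)]
    refine commutator_commutator_le_of_rotate ?_ ?_
    · rw [commutator_comm ⊤, ← lowerCentralSeries_succ]
      exact (ih (m + 1)).trans_eq (by ring_nf)
    · exact (commutator_mono (ih m) le_rfl).trans_eq (by rw [← lowerCentralSeries_succ]; ring_nf)

theorem commutatorElement_mem_lowerCentralSeries {m n : ℕ} {x y : G} (hx : x ∈ γ m)
    (hy : y ∈ γ n) : ⁅x, y⁆ ∈ γ (m + n + 1) :=
  commutator_lowerCentralSeries_le m n (commutator_mem_commutator hx hy)

theorem lowerCentralSeries_le_comap {K : Type*} [Group K] (φ : G →* K) (n : ℕ) :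
    γ n ≤ ((⊤ : Subgroup K).lowerCentralSeries n).comap φ := by
  rw [← map_le_iff_le_comap, map_lowerCentralSeries]
  exact lowerCentralSeries_mono n le_top

end Subgroup

theorem commutatorElement_mul_mul_eq {G : Type*} [Group G] {a x b y : G}
    (ha : ∀ z, Commute a z) (hxb : Commute x b) (hb : Commute b ⁅x, y⁆) :
    ⁅a * x, b * y⁆ = ⁅x, y⁆ := by
  calc ⁅a * x, b * y⁆ = a * (x * b * y * x⁻¹) * a⁻¹ * (y⁻¹ * b⁻¹) := by
        rw [commutatorElement_def]; group
    _ = x * b * y * x⁻¹ * (y⁻¹ * b⁻¹) := by rw [(ha _).eq]; group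
    _ = b * ⁅x, y⁆ * b⁻¹ := by rw [hxb.eq, commutatorElement_def]; group
    _ = ⁅x, y⁆ := by rw [hb.eq]; group

namespace QuotientGroup

variable {G : Type*} [Group G] {N : Subgroup G} [N.Normal]

theorem mk_eq_mk_iff_mul_inv_mem {x y : G} : (x : G ⧸ N) = y ↔ x * y⁻¹ ∈ N := by
  rw [eq_iff_div_mem, div_eq_mul_inv]

theorem commute_mk_of_commutatorElement_mem {x y : G} (h : ⁅x, y⁆ ∈ N) :
    Commute (x : G ⧸ N) y := by
  rw [← commutatorElement_eq_one_iff_commute]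
  exact (map_commutatorElement (mk' N) x y).symm.trans ((eq_one_iff _).mpr h)

end QuotientGroup

section

open Subgroup QuotientGroup

variable {G : Type*} [Group G]

theorem comp_mul_inv_mem_of_right_inverses {H : Subgroup G} [H.Normal]
    {f g h : G →* G} (hf : H ≤ H.comap f) (hg : H ≤ H.comap g) (hfg : ∀ x, f (g x) * x⁻¹ ∈ H)
    (hgh : ∀ x, g (h x) * x⁻¹ ∈ H) (x : G) : g (f x) * x⁻¹ ∈ H := by
  simp only [← mk_eq_mk_iff_mul_inv_mem] at hfg hgh ⊢
  calc (g (f x) : G ⧸ H) = map H H g hg (map H H f hf x) := rfl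
    _ = map H H g hg (map H H f hf (g (h x))) := by rw [hgh]
    _ = map H H g hg (f (g (h x))) := rfl
    _ = g (h x) := by rw [hfg]; rfl
    _ = x := hgh x

local notation "γ" => Subgroup.lowerCentralSeries (⊤ : Subgroup G)

theorem mk_commutatorElement_mul_mul {i k : ℕ} {a u v : G} (b : G) (ha : a ∈ γ i)
    (hu : u ∈ γ (i + k)) (hv : v ∈ γ k) :
    ((⁅u * a, v * b⁆ : G) : G ⧸ γ (i + k + 1)) = (⁅a, b⁆ : G) := by
  have hab : ⁅a, b⁆ ∈ γ (i + 1) := commutator_mem_commutator ha (mem_top b)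
  show mk' _ ⁅u * a, v * b⁆ = mk' _ ⁅a, b⁆
  simp only [map_commutatorElement, map_mul]
  refine commutatorElement_mul_mul_eq (fun z ↦ ?_) ?_ ?_
  · induction z using QuotientGroup.induction_on with
    | H z =>
      exact commute_mk_of_commutatorElement_mem (commutator_mem_commutator hu (mem_top z))
  · exact commute_mk_of_commutatorElement_mem (commutatorElement_mem_lowerCentralSeries ha hv)
  · rw [← map_commutatorElement]
    exact commute_mk_of_commutatorElement_mem
      (Subgroup.lowerCentralSeries_antitone _ (by omega)
        (commutatorElement_mem_lowerCentralSeries hv hab))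

theorem mul_inv_mem_lowerCentralSeries_add {f : G →* G} {r : ℕ} (hf : ∀ x, f x * x⁻¹ ∈ γ r) :
    ∀ {s : ℕ} {c : G}, c ∈ γ s → f c * c⁻¹ ∈ γ (s + r)
  | 0, c, _ => by simpa using hf c
  | s + 1, c, hc => by
    rw [Nat.add_right_comm, ← mk_eq_mk_iff_mul_inv_mem]
    suffices γ (s + 1) ≤ ((mk' (γ (s + r + 1))).comp f).eqLocus (mk' _) from this hc
    refine commutator_le.mpr fun x hx y _ ↦ ?_
    have hfx : f x = (f x * x⁻¹) * x := by group
    have hfy : f y = (f y * y⁻¹) * y := by group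
    show mk' _ (f ⁅x, y⁆) = mk' _ ⁅x, y⁆
    rw [map_commutatorElement, hfx, hfy]
    exact mk_commutatorElement_mul_mul y hx (mul_inv_mem_lowerCentralSeries_add hf hx) (hf y)

end

namespace FreeGroup

variable {ι : Type*}

theorem mul_inv_mem_of_forall_of {H : Subgroup (FreeGroup ι)} [H.Normal]
    {φ : FreeGroup ι →* FreeGroup ι} (h : ∀ i, φ (of i) * (of i)⁻¹ ∈ H) (x : FreeGroup ι) :
    φ x * x⁻¹ ∈ H := by
  have : (QuotientGroup.mk' H).comp φ = QuotientGroup.mk' H :=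
    ext_hom _ _ fun i ↦ QuotientGroup.mk_eq_mk_iff_mul_inv_mem.mpr (h i)
  exact QuotientGroup.mk_eq_mk_iff_mul_inv_mem.mp (DFunLike.congr_fun this x)

local notation "γ" => Subgroup.lowerCentralSeries (⊤ : Subgroup (FreeGroup ι))

theorem exists_comp_mul_inv_mem_lowerCentralSeries_add {F : FreeGroup ι →* FreeGroup ι} {r k : ℕ}
    (hF : ∀ x, F x * x⁻¹ ∈ γ r) (hFk : ∀ x, F x * x⁻¹ ∈ γ k) :
    ∃ h : FreeGroup ι →* FreeGroup ι,
      (∀ x, h x * x⁻¹ ∈ γ k) ∧ ∀ x, F (h x) * x⁻¹ ∈ γ (k + r) := by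
  let e i := F (of i) * (of i)⁻¹
  let h : FreeGroup ι →* FreeGroup ι := lift fun i ↦ (e i)⁻¹ * of i
  refine ⟨h, mul_inv_mem_of_forall_of fun i ↦ ?_,
    mul_inv_mem_of_forall_of (φ := F.comp h) fun i ↦ ?_⟩
  · simpa only [h, lift_apply_of, mul_inv_cancel_right] using inv_mem (hFk (of i))
  -- `F (h xᵢ) xᵢ⁻¹ = F (eᵢ⁻¹) eᵢ` with `eᵢ⁻¹ ∈ γ k`: Andreadakis' estimate applies.
  · have := mul_inv_mem_lowerCentralSeries_add hF (inv_mem (hFk (of i)))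
    rw [MonoidHom.comp_apply, lift_apply_of, _root_.map_mul, mul_assoc]
    simpa only [inv_inv] using this

theorem exists_right_inverse_mod_lowerCentralSeries {f : FreeGroup ι →* FreeGroup ι} {r : ℕ}
    (hr : 1 ≤ r) (hf : ∀ x, f x * x⁻¹ ∈ γ r) (k : ℕ) :
    ∃ g : FreeGroup ι →* FreeGroup ι, (∀ x, g x * x⁻¹ ∈ γ r) ∧ ∀ x, f (g x) * x⁻¹ ∈ γ k := by
  suffices ∀ k, ∃ g : FreeGroup ι →* FreeGroup ι,
      (∀ x, g x * x⁻¹ ∈ γ r) ∧ ∀ x, f (g x) * x⁻¹ ∈ γ (k + r) by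
    obtain ⟨g, hg, hfg⟩ := this k
    exact ⟨g, hg, fun x ↦ Subgroup.lowerCentralSeries_antitone _ (by omega) (hfg x)⟩
  intro k
  induction k with
  | zero => exact ⟨MonoidHom.id _, by simp, by simpa using hf⟩
  | succ k ih =>
    obtain ⟨g, hg, hfg⟩ := ih
    have hfg_r : ∀ x, f.comp g x * x⁻¹ ∈ γ r :=
      fun x ↦ Subgroup.lowerCentralSeries_antitone _ (by omega) (hfg x)
    obtain ⟨h, hh, hfgh⟩ := exists_comp_mul_inv_mem_lowerCentralSeries_add hfg_r hfg
    refine ⟨g.comp h, fun x ↦ ?_,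
      fun x ↦ Subgroup.lowerCentralSeries_antitone _ (by omega) (hfgh x)⟩
    simpa [mul_assoc] using
      mul_mem (hg (h x)) (Subgroup.lowerCentralSeries_antitone _ (by omega) (hh x))

end FreeGroup

theorem stmt5_general (n r N : ℕ) (hr : 1 ≤ r)
    (f : FreeGroup (Fin n) →* FreeGroup (Fin n))
    (hf : ∀ x : FreeGroup (Fin n), f x * x⁻¹ ∈ Gam (FreeGroup (Fin n)) (r + 1)) :
    ∃ g : FreeGroup (Fin n) →* FreeGroup (Fin n),
      (∀ x : FreeGroup (Fin n), g x * x⁻¹ ∈ Gam (FreeGroup (Fin n)) (r + 1)) ∧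
      (∀ x : FreeGroup (Fin n), f (g x) * x⁻¹ ∈ Gam (FreeGroup (Fin n)) (N + 1)) ∧
      (∀ x : FreeGroup (Fin n), g (f x) * x⁻¹ ∈ Gam (FreeGroup (Fin n)) (N + 1)) := by
  obtain ⟨g, hg, hfg⟩ := FreeGroup.exists_right_inverse_mod_lowerCentralSeries hr hf N
  obtain ⟨h, -, hgh⟩ := FreeGroup.exists_right_inverse_mod_lowerCentralSeries hr hg N
  exact ⟨g, hg, hfg, comp_mul_inv_mem_of_right_inverses (Subgroup.lowerCentralSeries_le_comap f N)
    (Subgroup.lowerCentralSeries_le_comap g N) hfg hgh⟩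

/-- Every element of the quotient monoid `𝔈_r(n)/∼_N` is invertible: for each
`f ∈ 𝔈_r(n)` there is a `g ∈ 𝔈_r(n)` with `f∘g ∼_N id` and `g∘f ∼_N id`
(i.e. `f(g(x))x⁻¹ ∈ Γ_{N+1}` and `g(f(x))x⁻¹ ∈ Γ_{N+1}` for all `x`).
In particular `𝔈_r(n)/∼_N` is a group. -/
theorem stmt5 (n r N : ℕ) (hr : 1 ≤ r) (hrN : r ≤ N)
    (f : FreeGroup (Fin n) →* FreeGroup (Fin n))
    (hf : ∀ x : FreeGroup (Fin n), f x * x⁻¹ ∈ Gam (FreeGroup (Fin n)) (r + 1)) :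
    ∃ g : FreeGroup (Fin n) →* FreeGroup (Fin n),
      (∀ x : FreeGroup (Fin n), g x * x⁻¹ ∈ Gam (FreeGroup (Fin n)) (r + 1)) ∧
      (∀ x : FreeGroup (Fin n), f (g x) * x⁻¹ ∈ Gam (FreeGroup (Fin n)) (N + 1)) ∧
      (∀ x : FreeGroup (Fin n), g (f x) * x⁻¹ ∈ Gam (FreeGroup (Fin n)) (N + 1)) :=
  stmt5_general n r N hr f hf
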